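/- arXiv:1902.08350 — 3 statements merged into one kernel-verified Lean document; each statement's English description precedes it below -/
import Mathlib

section
/- Let E be a measurable space in which all singletons are measurable, let x_1, ..., x_I be nonempty pairwise disjoint measurable subsets of E, let π ∈ ℝ^I with π_i ≥ 0 and Σ_i π_i = 1, and let g : E → ℝ be a measurable function bounded on x_1 ∪ ... ∪ x_I. Then for every real number t with Σ_{i=1}^I π_i · inf_{y ∈ x_i} g(y) < t < Σ_{i=1}^I π_i · sup_{y ∈ x_i} g(y), there exists a probability measure Q on E such that Q(x_i) = π_i for all i and ∫ g dQ = t. -/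
open MeasureTheory

lemma my_integrable_dirac {E : Type*} [MeasurableSpace E] [MeasurableSingletonClass E]
    (g : E → ℝ) (hg : Measurable g) (a : E) : Integrable g (Measure.dirac a) := by
  refine ⟨hg.aestronglyMeasurable, ?_⟩
  rw [HasFiniteIntegral, lintegral_dirac]
  exact ENNReal.coe_lt_top

/-- Sharpness part of Theorem 3: every value `t` strictly between the
probability-weighted sums of patchwise infima and suprema of `g` is attained
as `∫ g dQ` for some probability measure `Q` with the prescribed patch
probabilities. -/
theorem stmt5 {E : Type*} [MeasurableSpace E] [MeasurableSingletonClass E]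
    (I : ℕ) (x : Fin I → Set E)
    (hne : ∀ i, (x i).Nonempty)
    (hmeas : ∀ i, MeasurableSet (x i))
    (hdisj : Pairwise (Function.onFun Disjoint x))
    (π : Fin I → ℝ) (hπ0 : ∀ i, 0 ≤ π i) (hπ1 : ∑ i, π i = 1)
    (g : E → ℝ) (hgmeas : Measurable g)
    (hgbdd : ∃ M : ℝ, ∀ y ∈ ⋃ i, x i, |g y| ≤ M)
    (t : ℝ)
    (hlo : ∑ i, π i * sInf (g '' x i) < t)
    (hhi : t < ∑ i, π i * sSup (g '' x i)) :
    ∃ Q : Measure E, IsProbabilityMeasure Q ∧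
      (∀ i, (Q (x i)).toReal = π i) ∧ ∫ y, g y ∂Q = t := by
  classical
  set lo := ∑ i, π i * sInf (g '' x i) with hlo_def
  set hi := ∑ i, π i * sSup (g '' x i) with hhi_def
  set ε : ℝ := min (t - lo) (hi - t) / 2 with hε_def
  have hεlt1 : ε < t - lo := by
    have h1 : 0 < t - lo := by linarith
    have h2 : 0 < hi - t := by linarith
    have := min_le_left (t - lo) (hi - t)
    have := lt_min h1 h2
    simp only [hε_def]
    linarith [min_le_left (t - lo) (hi - t)]
  have hεlt2 : ε < hi - t := by
    have h1 : 0 < t - lo := by linarith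
    have h2 : 0 < hi - t := by linarith
    have := lt_min h1 h2
    simp only [hε_def]
    linarith [min_le_right (t - lo) (hi - t)]
  have hε : 0 < ε := by
    have h1 : 0 < t - lo := by linarith
    have h2 : 0 < hi - t := by linarith
    have := lt_min h1 h2
    positivity
  -- pick points close to inf and sup
  have hA : ∀ i, ∃ a ∈ x i, g a < sInf (g '' x i) + ε := by
    intro i
    obtain ⟨v, hv, hvlt⟩ := Real.lt_sInf_add_pos ((hne i).image g) hε
    obtain ⟨a, ha, rfl⟩ := hv
    exact ⟨a, ha, hvlt⟩
  have hB : ∀ i, ∃ b ∈ x i, sSup (g '' x i) - ε < g b := by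
    intro i
    obtain ⟨v, hv, hvlt⟩ :=
      Real.add_neg_lt_sSup ((hne i).image g) (neg_neg_of_pos hε)
    obtain ⟨b, hb, rfl⟩ := hv
    exact ⟨b, hb, by linarith [hvlt]⟩
  choose a ha hga using hA
  choose b hb hgb using hB
  set A : ℝ := ∑ i, π i * g (a i) with hA_def
  set B : ℝ := ∑ i, π i * g (b i) with hB_def
  have hAt : A < t := by
    have h1 : A ≤ ∑ i, π i * (sInf (g '' x i) + ε) :=
      Finset.sum_le_sum fun i _ => mul_le_mul_of_nonneg_left (hga i).le (hπ0 i)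
    have h2 : ∑ i, π i * (sInf (g '' x i) + ε) = lo + ε := by
      simp only [mul_add, Finset.sum_add_distrib, ← Finset.sum_mul, hπ1, hlo_def, one_mul]
    linarith
  have hBt : t < B := by
    have h1 : ∑ i, π i * (sSup (g '' x i) - ε) ≤ B :=
      Finset.sum_le_sum fun i _ => mul_le_mul_of_nonneg_left (hgb i).le (hπ0 i)
    have h2 : ∑ i, π i * (sSup (g '' x i) - ε) = hi - ε := by
      simp only [mul_sub, Finset.sum_sub_distrib, ← Finset.sum_mul, hπ1, hhi_def, one_mul]
    linarith
  have hAB : A < B := hAt.trans hBt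
  set l : ℝ := (t - A) / (B - A) with hl_def
  have hl0 : 0 ≤ l := by
    apply div_nonneg <;> linarith
  have hl1 : l ≤ 1 := by
    rw [hl_def, div_le_one (by linarith)]
    linarith
  have hlmul : l * (B - A) = t - A := by
    rw [hl_def, div_mul_cancel₀ _ (by linarith : B - A ≠ 0)]
  set c : Fin I → ENNReal := fun i => ENNReal.ofReal (π i * (1 - l)) with hc_def
  set d : Fin I → ENNReal := fun i => ENNReal.ofReal (π i * l) with hd_def
  have hcd : ∀ i, c i + d i = ENNReal.ofReal (π i) := by
    intro i
    rw [hc_def, hd_def, ← ENNReal.ofReal_add (mul_nonneg (hπ0 i) (by linarith)) (mul_nonneg (hπ0 i) hl0)]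
    ring_nf
  set Q : Measure E :=
    ∑ i, (c i • Measure.dirac (a i) + d i • Measure.dirac (b i)) with hQ_def
  have hQapp : ∀ s : Set E, MeasurableSet s →
      Q s = ∑ i, (c i * Set.indicator s 1 (a i) + d i * Set.indicator s 1 (b i)) := by
    intro s hs
    rw [hQ_def]
    rw [Measure.finset_sum_apply]
    refine Finset.sum_congr rfl fun i _ => ?_
    rw [Measure.add_apply, Measure.smul_apply, Measure.smul_apply,
      Measure.dirac_apply' _ hs, Measure.dirac_apply' _ hs]
    rfl
  have hprob : IsProbabilityMeasure Q := by
    constructor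
    rw [hQapp Set.univ MeasurableSet.univ]
    simp only [Set.indicator_univ, Pi.one_apply, mul_one]
    rw [Finset.sum_congr rfl fun i _ => hcd i, ← ENNReal.ofReal_sum_of_nonneg
      (fun i _ => hπ0 i), hπ1, ENNReal.ofReal_one]
  refine ⟨Q, hprob, ?_, ?_⟩
  · intro i
    rw [hQapp (x i) (hmeas i)]
    have key : ∀ j, (c j * Set.indicator (x i) 1 (a j) + d j * Set.indicator (x i) 1 (b j))
        = if j = i then ENNReal.ofReal (π i) else 0 := by
      intro j
      by_cases hji : j = i
      · subst hji
        rw [Set.indicator_of_mem (ha j), Set.indicator_of_mem (hb j)]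
        simp [hcd j]
      · have h1 : a j ∉ x i := fun hm => (hdisj hji).le_bot ⟨ha j, hm⟩
        have h2 : b j ∉ x i := fun hm => (hdisj hji).le_bot ⟨hb j, hm⟩
        simp [hji, Set.indicator_of_notMem h1, Set.indicator_of_notMem h2]
    rw [Finset.sum_congr rfl fun j _ => key j, Finset.sum_ite_eq' _ i]
    simp [ENNReal.toReal_ofReal (hπ0 i)]
  · have hint : ∀ i : Fin I,
        Integrable g (c i • Measure.dirac (a i) + d i • Measure.dirac (b i)) := by
      intro i
      exact ((my_integrable_dirac g hgmeas (a i)).smul_measure ENNReal.ofReal_ne_top).add_measure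
        ((my_integrable_dirac g hgmeas (b i)).smul_measure ENNReal.ofReal_ne_top)
    rw [hQ_def, integral_finset_sum_measure fun i _ => hint i]
    have hterm : ∀ i : Fin I,
        ∫ y, g y ∂(c i • Measure.dirac (a i) + d i • Measure.dirac (b i))
          = π i * (1 - l) * g (a i) + π i * l * g (b i) := by
      intro i
      rw [integral_add_measure ((my_integrable_dirac g hgmeas (a i)).smul_measure
          ENNReal.ofReal_ne_top)
        ((my_integrable_dirac g hgmeas (b i)).smul_measure ENNReal.ofReal_ne_top),
        integral_smul_measure, integral_smul_measure, integral_dirac, integral_dirac,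
        ENNReal.toReal_ofReal (mul_nonneg (hπ0 i) (by linarith)),
        ENNReal.toReal_ofReal (mul_nonneg (hπ0 i) hl0)]
      simp [smul_eq_mul]
    rw [Finset.sum_congr rfl fun i _ => hterm i]
    have : ∑ i, (π i * (1 - l) * g (a i) + π i * l * g (b i))
        = (1 - l) * A + l * B := by
      rw [hA_def, hB_def, Finset.mul_sum, Finset.mul_sum, ← Finset.sum_add_distrib]
      refine Finset.sum_congr rfl fun i _ => by ring
    rw [this]
    nlinarith [hlmul]
end

section
/- Let x_1, ..., x_I be nonempty, pairwise disjoint, compact subsets of ℝ^K, let π ∈ ℝ^I with π_i ≥ 0 and Σ_i π_i = 1, and let z ∈ ℝ^K. Then { ∫ z·y dQ(y) : Q a Borel probability measure on ℝ^K with Q(x_i) = π_i for all i } is exactly the closed interval [ Σ_{i=1}^I π_i · min_{y ∈ x_i} z·y , Σ_{i=1}^I π_i · max_{y ∈ x_i} z·y ], where the patchwise minima and maxima exist by compactness. -/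
/-!
An admissible `Q` is concentrated on the union of the patches, since their masses already sum
to one; so `∫ z·y dQ` splits into the patch integrals, each squeezed between `π i * mlo i` and
`π i * mhi i`. Conversely, the two endpoints are the expectations under the atomic measures putting
mass `π i` at a minimiser (resp. maximiser) of `z·y` on each patch, and every value in between is
reached by mixing these two measures: the patch constraints are affine in the measure.
-/

open MeasureTheory Set Function

variable {α ι : Type*} [MeasurableSpace α]

def patchExpectations (s : ι → Set α) (π : ι → ℝ) (f : α → ℝ) : Set ℝ :=
  {t | ∃ Q : Measure α, IsProbabilityMeasure Q ∧ (∀ i, (Q (s i)).toReal = π i) ∧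
    t = ∫ y, f y ∂Q}

variable {s : ι → Set α} {π : ι → ℝ} {f : α → ℝ}

lemma segment_subset_patchExpectations (P₀ P₁ : Measure α)
    [IsProbabilityMeasure P₀] [IsProbabilityMeasure P₁]
    (h₀ : ∀ i, P₀.real (s i) = π i) (h₁ : ∀ i, P₁.real (s i) = π i)
    (hf₀ : Integrable f P₀) (hf₁ : Integrable f P₁) :
    segment ℝ (∫ y, f y ∂P₀) (∫ y, f y ∂P₁) ⊆ patchExpectations s π f := by
  rintro _ ⟨p, q, hp, hq, hpq, rfl⟩
  refine ⟨ENNReal.ofReal p • P₀ + ENNReal.ofReal q • P₁, ⟨?_⟩, fun i => ?_, ?_⟩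
  · simp [← ENNReal.ofReal_add hp hq, hpq]
  · rw [← measureReal_def,
      measureReal_add_apply (by simp [ENNReal.mul_eq_top]) (by simp [ENNReal.mul_eq_top]),
      measureReal_ennreal_smul_apply, measureReal_ennreal_smul_apply, h₀, h₁,
      ENNReal.toReal_ofReal hp, ENNReal.toReal_ofReal hq, ← add_mul, hpq, one_mul]
  · rw [integral_add_measure (hf₀.smul_measure ENNReal.ofReal_ne_top)
      (hf₁.smul_measure ENNReal.ofReal_ne_top), integral_smul_measure, integral_smul_measure,
      ENNReal.toReal_ofReal hp, ENNReal.toReal_ofReal hq]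

variable [Fintype ι]

lemma ae_mem_iUnion_of_sum_measureReal_eq_one {Q : Measure α} [IsProbabilityMeasure Q]
    (hs : ∀ i, MeasurableSet (s i)) (hdisj : Pairwise (Disjoint on s))
    (hQ : ∀ i, Q.real (s i) = π i) (hπ1 : ∑ i, π i = 1) :
    ∀ᵐ y ∂Q, y ∈ ⋃ i, s i := by
  have hU : Q.real (⋃ i, s i) = 1 := by
    rw [measureReal_iUnion_fintype hdisj hs, ← hπ1]
    exact Finset.sum_congr rfl fun i _ => hQ i
  refine mem_ae_iff.2 ((prob_compl_eq_zero_iff (MeasurableSet.iUnion hs)).2 ?_)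
  rwa [measureReal_def, ENNReal.toReal_eq_one_iff] at hU

lemma sum_measureReal_mul_le_integral {Q : Measure α} [IsFiniteMeasure Q] {lo : ι → ℝ}
    (hs : ∀ i, MeasurableSet (s i)) (hdisj : Pairwise (Disjoint on s))
    (hQ : ∀ᵐ y ∂Q, y ∈ ⋃ i, s i) (hf : Integrable f Q)
    (hlo : ∀ i, ∀ y ∈ s i, lo i ≤ f y) :
    ∑ i, Q.real (s i) * lo i ≤ ∫ y, f y ∂Q :=
  calc ∑ i, Q.real (s i) * lo i
      ≤ ∑ i, ∫ y in s i, f y ∂Q := Finset.sum_le_sum fun i _ =>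
        setIntegral_ge_of_const_le (hs i) (measure_ne_top _ _) (hlo i) hf.integrableOn
    _ = ∫ y in ⋃ i, s i, f y ∂Q :=
        (integral_iUnion_fintype hs hdisj fun _ => hf.integrableOn).symm
    _ = ∫ y, f y ∂Q := by rw [Measure.restrict_eq_self_of_ae_mem hQ]

lemma integral_le_sum_measureReal_mul {Q : Measure α} [IsFiniteMeasure Q] {hi : ι → ℝ}
    (hs : ∀ i, MeasurableSet (s i)) (hdisj : Pairwise (Disjoint on s))
    (hQ : ∀ᵐ y ∂Q, y ∈ ⋃ i, s i) (hf : Integrable f Q)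
    (hhi : ∀ i, ∀ y ∈ s i, f y ≤ hi i) :
    ∫ y, f y ∂Q ≤ ∑ i, Q.real (s i) * hi i := by
  have := sum_measureReal_mul_le_integral (lo := -hi) hs hdisj hQ hf.neg
    fun i y hy => neg_le_neg (hhi i y hy)
  simpa [integral_neg, Finset.sum_neg_distrib] using this

lemma patchExpectations_subset_Icc {lo hi : ι → ℝ}
    (hs : ∀ i, MeasurableSet (s i)) (hdisj : Pairwise (Disjoint on s))
    (hπ1 : ∑ i, π i = 1) (hf : Measurable f)
    (hlo : ∀ i, ∀ y ∈ s i, lo i ≤ f y) (hhi : ∀ i, ∀ y ∈ s i, f y ≤ hi i) :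
    patchExpectations s π f ⊆ Icc (∑ i, π i * lo i) (∑ i, π i * hi i) := by
  rintro _ ⟨Q, hQ, hQs, rfl⟩
  have hae := ae_mem_iUnion_of_sum_measureReal_eq_one hs hdisj hQs hπ1
  have hbound : ∀ᵐ y ∂Q, ‖f y‖ ≤ ∑ i, max |lo i| |hi i| := by
    filter_upwards [hae] with y hy
    obtain ⟨i, hyi⟩ := mem_iUnion.1 hy
    calc ‖f y‖ ≤ max |lo i| |hi i| := abs_le_max_abs_abs (hlo i y hyi) (hhi i y hyi)
      _ ≤ ∑ i, max |lo i| |hi i| :=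
        Finset.single_le_sum (f := fun j => max |lo j| |hi j|)
          (fun j _ => le_max_of_le_left (abs_nonneg (lo j))) (Finset.mem_univ i)
  have hfQ : Integrable f Q := Integrable.of_bound hf.aestronglyMeasurable _ hbound
  simp only [← hQs]
  exact ⟨sum_measureReal_mul_le_integral hs hdisj hae hfQ hlo,
    integral_le_sum_measureReal_mul hs hdisj hae hfQ hhi⟩

noncomputable def diracCombination (w : ι → ℝ) (a : ι → α) : Measure α :=
  ∑ i, ENNReal.ofReal (w i) • Measure.dirac (a i)

section diracCombination

variable {w : ι → ℝ} {a : ι → α}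

lemma diracCombination_apply_of_mem (hs : ∀ i, MeasurableSet (s i))
    (hdisj : Pairwise (Disjoint on s)) (ha : ∀ i, a i ∈ s i) (j : ι) :
    diracCombination w a (s j) = ENNReal.ofReal (w j) := by
  rw [diracCombination, Measure.coe_finsetSum, Finset.sum_apply, Finset.sum_eq_single j]
  · simp [Measure.dirac_apply_of_mem (ha j)]
  · intro i _ hij
    simp [Measure.dirac_apply' _ (hs j),
      indicator_of_notMem ((hdisj hij).notMem_of_mem_left (ha i))]
  · simp

lemma isProbabilityMeasure_diracCombination (hw0 : ∀ i, 0 ≤ w i) (hw1 : ∑ i, w i = 1) :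
    IsProbabilityMeasure (diracCombination w a) := by
  constructor
  simp [diracCombination, Measure.coe_finsetSum,
    ← ENNReal.ofReal_sum_of_nonneg fun i _ => hw0 i, hw1]

variable [MeasurableSingletonClass α]

lemma integrable_diracCombination : Integrable f (diracCombination w a) :=
  integrable_finsetSum_measure.2 fun _ _ =>
    (integrable_dirac enorm_lt_top).smul_measure ENNReal.ofReal_ne_top

lemma integral_diracCombination (hw0 : ∀ i, 0 ≤ w i) :
    ∫ y, f y ∂diracCombination w a = ∑ i, w i * f (a i) := by
  rw [diracCombination, integral_finsetSum_measure fun _ _ =>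
    (integrable_dirac enorm_lt_top).smul_measure ENNReal.ofReal_ne_top]
  simp [integral_smul_measure, ENNReal.toReal_ofReal (hw0 _)]

end diracCombination

lemma Icc_subset_patchExpectations [MeasurableSingletonClass α] {a b : ι → α}
    (hs : ∀ i, MeasurableSet (s i)) (hdisj : Pairwise (Disjoint on s))
    (hπ0 : ∀ i, 0 ≤ π i) (hπ1 : ∑ i, π i = 1) (ha : ∀ i, a i ∈ s i) (hb : ∀ i, b i ∈ s i) :
    Icc (∑ i, π i * f (a i)) (∑ i, π i * f (b i)) ⊆ patchExpectations s π f := by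
  have := isProbabilityMeasure_diracCombination (a := a) hπ0 hπ1
  have := isProbabilityMeasure_diracCombination (a := b) hπ0 hπ1
  have hpatch (c : ι → α) (hc : ∀ i, c i ∈ s i) (i : ι) :
      (diracCombination π c).real (s i) = π i := by
    rw [measureReal_def, diracCombination_apply_of_mem hs hdisj hc, ENNReal.toReal_ofReal (hπ0 i)]
  calc Icc (∑ i, π i * f (a i)) (∑ i, π i * f (b i))
      ⊆ segment ℝ (∑ i, π i * f (a i)) (∑ i, π i * f (b i)) :=
        segment_eq_uIcc (𝕜 := ℝ) _ _ ▸ Icc_subset_uIcc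
    _ ⊆ patchExpectations s π f := by
      simpa only [integral_diracCombination hπ0] using
        segment_subset_patchExpectations _ _ (hpatch a ha) (hpatch b hb)
          integrable_diracCombination integrable_diracCombination

/-- Corollary 4 in sharp form: with compact disjoint patches `x i` and patch
probabilities `π i`, the attainable expectations of the linear functional
`y ↦ z·y` form exactly the closed interval between `∑ i π i mlo i` and
`∑ i π i mhi i`, where `mlo i` and `mhi i` are the attained patchwise minimum
and maximum of `z·y`. -/
theorem stmt6 (K I : ℕ) (x : Fin I → Set (Fin K → ℝ))
    (hne : ∀ i, (x i).Nonempty)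
    (hcomp : ∀ i, IsCompact (x i))
    (hdisj : Pairwise (Function.onFun Disjoint x))
    (π : Fin I → ℝ) (hπ0 : ∀ i, 0 ≤ π i) (hπ1 : ∑ i, π i = 1)
    (z : Fin K → ℝ) :
    ∃ mlo mhi : Fin I → ℝ,
      (∀ i, IsLeast ((fun y : Fin K → ℝ => ∑ k, z k * y k) '' x i) (mlo i)) ∧
      (∀ i, IsGreatest ((fun y : Fin K → ℝ => ∑ k, z k * y k) '' x i) (mhi i)) ∧
      {t : ℝ | ∃ Q : Measure (Fin K → ℝ), IsProbabilityMeasure Q ∧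
          (∀ i, (Q (x i)).toReal = π i) ∧
          t = ∫ y, (∑ k, z k * y k) ∂Q}
        = Set.Icc (∑ i, π i * mlo i) (∑ i, π i * mhi i) := by
  set f : (Fin K → ℝ) → ℝ := fun y => ∑ k, z k * y k
  have hf : Continuous f := by fun_prop
  have hs i : MeasurableSet (x i) := (hcomp i).measurableSet
  choose mlo hmlo using fun i => ((hcomp i).image hf).exists_isLeast ((hne i).image f)
  choose mhi hmhi using fun i => ((hcomp i).image hf).exists_isGreatest ((hne i).image f)
  choose a ha hfa using fun i => (hmlo i).1
  choose b hb hfb using fun i => (hmhi i).1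
  refine ⟨mlo, mhi, hmlo, hmhi, Subset.antisymm ?_ ?_⟩
  · exact patchExpectations_subset_Icc hs hdisj hπ1 hf.measurable
      (fun i y hy => (hmlo i).2 ⟨y, hy, rfl⟩) (fun i y hy => (hmhi i).2 ⟨y, hy, rfl⟩)
  · have hattain := Icc_subset_patchExpectations (f := f) hs hdisj hπ0 hπ1 ha hb
    simp only [hfa, hfb] at hattain
    exact hattain
end

section
/- Let (E, F) be a measurable space in which all singletons are measurable, let x_1, ..., x_I be nonempty pairwise disjoint measurable subsets of E, let π ∈ ℝ^I with π_i ≥ 0 and Σ_i π_i = 1, and let x be a measurable subset of E. Then there exist probability measures Q̲ and Q̄ on E with Q̲(x_i) = Q̄(x_i) = π_i for all i, such that Q̲(x) = Σ_{i : x_i ⊆ x} π_i and Q̄(x) = Σ_{i : x_i ∩ x ≠ ∅} π_i. -/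
open MeasureTheory
open scoped Classical

lemma aux8 {E : Type*} [MeasurableSpace E] [MeasurableSingletonClass E]
    (I : ℕ) (xs : Fin I → Set E)
    (hmeas : ∀ i, MeasurableSet (xs i))
    (hdisj : Pairwise (Function.onFun Disjoint xs))
    (π : Fin I → ℝ) (hπ0 : ∀ i, 0 ≤ π i) (hπ1 : ∑ i, π i = 1)
    (x : Set E) (hx : MeasurableSet x)
    (p : Fin I → E) (hp : ∀ i, p i ∈ xs i) :
    ∃ Q : Measure E, IsProbabilityMeasure Q ∧ (∀ i, (Q (xs i)).toReal = π i) ∧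
      (Q x).toReal = ∑ i ∈ Finset.univ.filter (fun i => p i ∈ x), π i := by
  set Q : Measure E := ∑ i, (ENNReal.ofReal (π i)) • Measure.dirac (p i) with hQ
  have happ : ∀ s : Set E, MeasurableSet s →
      Q s = ∑ i ∈ Finset.univ.filter (fun i => p i ∈ s), ENNReal.ofReal (π i) := by
    intro s hs
    rw [hQ, Measure.finset_sum_apply]
    simp only [Measure.smul_apply, smul_eq_mul, Measure.dirac_apply' _ hs]
    rw [Finset.sum_filter]
    refine Finset.sum_congr rfl fun i _ => ?_
    by_cases h : p i ∈ s
    · simp [h, Set.indicator_of_mem h]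
    · simp [h, Set.indicator_of_notMem h]
  have htot : ∀ s : Set E, MeasurableSet s →
      (Q s).toReal = ∑ i ∈ Finset.univ.filter (fun i => p i ∈ s), π i := by
    intro s hs
    rw [happ s hs]
    rw [ENNReal.toReal_sum (by intro i _; exact ENNReal.ofReal_ne_top)]
    exact Finset.sum_congr rfl fun i _ => ENNReal.toReal_ofReal (hπ0 i)
  refine ⟨Q, ?_, ?_, htot x hx⟩
  · constructor
    rw [happ Set.univ MeasurableSet.univ]
    simp only [Set.mem_univ, Finset.filter_true]
    rw [← ENNReal.ofReal_sum_of_nonneg (fun i _ => hπ0 i), hπ1, ENNReal.ofReal_one]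
  · intro j
    rw [htot (xs j) (hmeas j)]
    have : Finset.univ.filter (fun i : Fin I => p i ∈ xs j) = {j} := by
      ext i
      simp only [Finset.mem_filter, Finset.mem_univ, true_and, Finset.mem_singleton]
      constructor
      · intro hi
        by_contra hij
        exact (hdisj hij).le_bot ⟨hp i, hi⟩
      · intro hij; exact hij ▸ hp i
    rw [this, Finset.sum_singleton]

/-- Sharpness of the event-probability bounds in Corollary 5: both the lower
bound (total mass of patches contained in `x`) and the upper bound (total mass
of patches meeting `x`) are attained by probability measures with the
prescribed patch probabilities. -/
theorem stmt8 {E : Type*} [MeasurableSpace E] [MeasurableSingletonClass E]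
    (I : ℕ) (xs : Fin I → Set E)
    (hne : ∀ i, (xs i).Nonempty)
    (hmeas : ∀ i, MeasurableSet (xs i))
    (hdisj : Pairwise (Function.onFun Disjoint xs))
    (π : Fin I → ℝ) (hπ0 : ∀ i, 0 ≤ π i) (hπ1 : ∑ i, π i = 1)
    (x : Set E) (hx : MeasurableSet x) :
    ∃ Qlo Qhi : Measure E, IsProbabilityMeasure Qlo ∧ IsProbabilityMeasure Qhi ∧
      (∀ i, (Qlo (xs i)).toReal = π i) ∧ (∀ i, (Qhi (xs i)).toReal = π i) ∧
      (Qlo x).toReal = ∑ i ∈ Finset.univ.filter (fun i => xs i ⊆ x), π i ∧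
      (Qhi x).toReal
        = ∑ i ∈ Finset.univ.filter (fun i => (xs i ∩ x).Nonempty), π i := by
  -- points for the lower bound: outside x whenever possible
  set plo : Fin I → E := fun i =>
    if h : (xs i \ x).Nonempty then h.choose else (hne i).choose with hplo
  have hplo_mem : ∀ i, plo i ∈ xs i := by
    intro i
    by_cases h : (xs i \ x).Nonempty
    · simp only [hplo, dif_pos h]; exact h.choose_spec.1
    · simp only [hplo, dif_neg h]; exact (hne i).choose_spec
  have hplo_iff : ∀ i, plo i ∈ x ↔ xs i ⊆ x := by
    intro i
    by_cases h : (xs i \ x).Nonempty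
    · simp only [hplo, dif_pos h]
      constructor
      · intro hmem; exact absurd hmem h.choose_spec.2
      · intro hsub; exact absurd (hsub h.choose_spec.1) h.choose_spec.2
    · have hsub : xs i ⊆ x := by
        intro a ha
        by_contra hax
        exact h ⟨a, ha, hax⟩
      simp only [hplo, dif_neg h]
      exact ⟨fun _ => hsub, fun _ => hsub (hne i).choose_spec⟩
  -- points for the upper bound: inside x whenever possible
  set phi : Fin I → E := fun i =>
    if h : (xs i ∩ x).Nonempty then h.choose else (hne i).choose with hphi
  have hphi_mem : ∀ i, phi i ∈ xs i := by
    intro i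
    by_cases h : (xs i ∩ x).Nonempty
    · simp only [hphi, dif_pos h]; exact h.choose_spec.1
    · simp only [hphi, dif_neg h]; exact (hne i).choose_spec
  have hphi_iff : ∀ i, phi i ∈ x ↔ (xs i ∩ x).Nonempty := by
    intro i
    by_cases h : (xs i ∩ x).Nonempty
    · simp only [hphi, dif_pos h]
      exact ⟨fun _ => h, fun _ => h.choose_spec.2⟩
    · simp only [hphi, dif_neg h]
      exact ⟨fun hmem => absurd ⟨_, (hne i).choose_spec, hmem⟩ h, fun hh => absurd hh h⟩
  obtain ⟨Qlo, hQlo1, hQlo2, hQlo3⟩ :=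
    aux8 I xs hmeas hdisj π hπ0 hπ1 x hx plo hplo_mem
  obtain ⟨Qhi, hQhi1, hQhi2, hQhi3⟩ :=
    aux8 I xs hmeas hdisj π hπ0 hπ1 x hx phi hphi_mem
  refine ⟨Qlo, Qhi, hQlo1, hQhi1, hQlo2, hQhi2, ?_, ?_⟩
  · rw [hQlo3]
    exact Finset.sum_congr (by ext i; simp [hplo_iff i]) (fun _ _ => rfl)
  · rw [hQhi3]
    exact Finset.sum_congr (by ext i; simp [hphi_iff i]) (fun _ _ => rfl)
end
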